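/- arXiv:2204.04626 — 3 statements merged into one kernel-verified Lean document; each statement's English description precedes it below -/
import Mathlib

section
/- Let f ∈ ℂ[x,y] be a nonzero polynomial whose Newton polytope P (the convex hull of its support) has the property that every vertex (α,β) of P satisfies α ≥ 1 and β ≥ 1. Then the Newton polytope of the polynomial x²y²·Hess(f) equals 3P, the dilate of P by 3. In particular Hess(f) ≠ 0. -/
open scoped Pointwise
open MvPolynomial

noncomputable section

/-- The torus `(ℂ ∖ {0})²`. -/
def Torus : Set (ℂ × ℂ) := {p | p.1 ≠ 0 ∧ p.2 ≠ 0}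

/-- Evaluation of a bivariate polynomial at a point of `ℂ²`. -/
def evalP (f : MvPolynomial (Fin 2) ℂ) (p : ℂ × ℂ) : ℂ :=
  MvPolynomial.eval (fun i => if i = 0 then p.1 else p.2) f

/-- The affine line through `p` with direction `w`, as a subset of `ℂ²`. -/
def lineThrough (p w : ℂ × ℂ) : Set (ℂ × ℂ) :=
  {q | ∃ t : ℂ, q = (p.1 + t * w.1, p.2 + t * w.2)}

/-- The univariate polynomial `t ↦ f (p + t • w)`. -/
def lineRestrict (f : MvPolynomial (Fin 2) ℂ) (p w : ℂ × ℂ) : Polynomial ℂ :=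
  MvPolynomial.aeval
    (fun i => if i = 0 then Polynomial.C p.1 + Polynomial.C w.1 * Polynomial.X
              else Polynomial.C p.2 + Polynomial.C w.2 * Polynomial.X) f

/-- Intersection multiplicity at `p` of the curve `{f = 0}` and the line through `p`
with direction `w` (as `ℕ∞`; it is `⊤` if the line lies inside the curve). -/
def interMult (f : MvPolynomial (Fin 2) ℂ) (p w : ℂ × ℂ) : ℕ∞ :=
  if lineRestrict f p w = 0 then ⊤
  else (Polynomial.rootMultiplicity 0 (lineRestrict f p w) : ℕ∞)

/-- The point of `ℝ²` corresponding to a lattice point. -/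
def rpt (k : ℤ × ℤ) : ℝ × ℝ := ((k.1 : ℝ), (k.2 : ℝ))

/-- The support of `f` is contained in `S ⊆ ℤ²`. -/
def SuppIn (f : MvPolynomial (Fin 2) ℂ) (S : Set (ℤ × ℤ)) : Prop :=
  ∀ m ∈ f.support, ((m 0 : ℤ), (m 1 : ℤ)) ∈ S

/-- The coefficient of `f` at the exponent `k ∈ ℤ²`. -/
def coeffAt (f : MvPolynomial (Fin 2) ℂ) (k : ℤ × ℤ) : ℂ :=
  if 0 ≤ k.1 ∧ 0 ≤ k.2 then
    f.coeff (Finsupp.single (0 : Fin 2) k.1.toNat + Finsupp.single (1 : Fin 2) k.2.toNat)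
  else 0

/-- A property `Q` holds for a generic polynomial supported in `S`: there is a nonzero
polynomial `D` in variables indexed by `S` such that `Q f` holds for every `f` with
support in `S` whose coefficient tuple is not annihilated by `D`. -/
def GenericOn (S : Set (ℤ × ℤ)) (Q : MvPolynomial (Fin 2) ℂ → Prop) : Prop :=
  ∃ D : MvPolynomial S ℂ, D ≠ 0 ∧
    ∀ f : MvPolynomial (Fin 2) ℂ, SuppIn f S →
      MvPolynomial.eval (fun k => coeffAt f k.1) D ≠ 0 → Q f

/-- `P` is a lattice polygon: the convex hull of finitely many lattice points. -/
def IsLatticePolygon (P : Set (ℝ × ℝ)) : Prop :=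
  ∃ V : Finset (ℤ × ℤ), V.Nonempty ∧ P = convexHull ℝ (rpt '' (V : Set (ℤ × ℤ)))

/-- The standard triangle `Δ = conv {(0,0), (1,0), (0,1)}`. -/
def stdTriangle : Set (ℝ × ℝ) := convexHull ℝ {(0, 0), (1, 0), (0, 1)}

/-- The lattice points of a subset of `ℝ²`. -/
def latticePts (P : Set (ℝ × ℝ)) : Set (ℤ × ℤ) := {k | rpt k ∈ P}

/-- The support set (face) of `P` in the direction of the covector `γ`. -/
def face (P : Set (ℝ × ℝ)) (γ : ℤ × ℤ) : Set (ℝ × ℝ) :=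
  {p ∈ P | ∀ q ∈ P, (γ.1 : ℝ) * q.1 + (γ.2 : ℝ) * q.2 ≤ (γ.1 : ℝ) * p.1 + (γ.2 : ℝ) * p.2}

/-- The lattice length of the face of `P` in direction `γ`. -/
def lenFace (P : Set (ℝ × ℝ)) (γ : ℤ × ℤ) : ℕ := (latticePts (face P γ)).ncard - 1

/-- The Euclidean area of a subset of `ℝ²`. -/
def areaOf (P : Set (ℝ × ℝ)) : ℝ := (MeasureTheory.volume P).toReal

/-- The set of inflection points of `{f = 0}` in the torus. -/
def inflPts (f : MvPolynomial (Fin 2) ℂ) : Set (ℂ × ℂ) :=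
  {p | p ∈ Torus ∧ evalP f p = 0 ∧ ∃ w : ℂ × ℂ, w ≠ 0 ∧ 3 ≤ interMult f p w}

/-- The set of lines (as subsets of `ℂ²`) tangent to `{f = 0}` at two distinct
points of the torus. -/
def bitangentLines (f : MvPolynomial (Fin 2) ℂ) : Set (Set (ℂ × ℂ)) :=
  {l | ∃ p w q₁ q₂ : ℂ × ℂ, w ≠ 0 ∧ l = lineThrough p w ∧
    q₁ ∈ lineThrough p w ∩ Torus ∧ q₂ ∈ lineThrough p w ∩ Torus ∧ q₁ ≠ q₂ ∧
    2 ≤ interMult f q₁ w ∧ 2 ≤ interMult f q₂ w}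

/-- `P` contains a lattice translate of `5Δ`. -/
def Contains5Delta (P : Set (ℝ × ℝ)) : Prop :=
  ∃ t : ℤ × ℤ, rpt t +ᵥ ((5 : ℝ) • stdTriangle) ⊆ P

/-- The (bordered) Hessian polynomial of `f`:
`Hess f = 2 f_x f_y f_{xy} - f_x² f_{yy} - f_y² f_{xx}`. -/
def hess (f : MvPolynomial (Fin 2) ℂ) : MvPolynomial (Fin 2) ℂ :=
  2 * pderiv 0 f * pderiv 1 f * pderiv 0 (pderiv 1 f)
    - (pderiv 0 f) ^ 2 * pderiv 1 (pderiv 1 f)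
    - (pderiv 1 f) ^ 2 * pderiv 0 (pderiv 0 f)

/-- The Newton polytope of `f`: the convex hull of its support. -/
def newtonPolytope (f : MvPolynomial (Fin 2) ℂ) : Set (ℝ × ℝ) :=
  convexHull ℝ {q : ℝ × ℝ | ∃ m ∈ f.support, q = ((m 0 : ℝ), (m 1 : ℝ))}


/-! With the Euler operators `θᵢ = xᵢ ∂ᵢ`, which multiply the coefficient of `x^m` by `mᵢ`,
`x²y² Hess f = 2 θ₀f θ₁f θ₀θ₁f - (θ₀f)² (θ₁²f - θ₁f) - (θ₁f)² (θ₀²f - θ₀f)` is a sum of products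
of three polynomials supported in `supp f`, so its Newton polytope lies in `3P`. If `v` is a
vertex of `P`, the only way to write `3v` as a sum of three points of `P` is `v + v + v`, so the
coefficient of `x^{3v}` is `c_v³ (2v₀²v₁² - v₀²(v₁² - v₁) - v₁²(v₀² - v₀)) = c_v³ v₀v₁(v₀ + v₁)`,
which is nonzero. Thus every vertex of `3P` lies in the Newton polytope of `x²y² Hess f`, and the
two polytopes agree. -/

section ExtremePoints

variable {E : Type*} [AddCommGroup E] [Module ℝ E] {A : Set E} {x a b c : E}

theorem eq_of_add_eq_two_nsmul_of_mem_extremePoints (hx : x ∈ A.extremePoints ℝ)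
    (ha : a ∈ A) (hb : b ∈ A) (h : a + b = 2 • x) : a = x ∧ b = x :=
  (mem_extremePoints.1 hx).2 a ha b hb
    ⟨2⁻¹, 2⁻¹, by norm_num, by norm_num, by norm_num, by
      linear_combination (norm := module) (2⁻¹ : ℝ) • h⟩

theorem eq_of_add_add_eq_three_nsmul_of_mem_extremePoints (hA : Convex ℝ A)
    (hx : x ∈ A.extremePoints ℝ) (ha : a ∈ A) (hb : b ∈ A) (hc : c ∈ A)
    (h : a + b + c = 3 • x) : a = x ∧ b = x ∧ c = x := by
  set w : E := (2⁻¹ : ℝ) • b + (2⁻¹ : ℝ) • c with hw_def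
  have hw : w ∈ A := hA hb hc (by norm_num) (by norm_num) (by norm_num)
  obtain ⟨rfl, hwa⟩ := (mem_extremePoints.1 hx).2 a ha w hw
    ⟨3⁻¹, 2 * 3⁻¹, by norm_num, by norm_num, by norm_num, by
      linear_combination (norm := module) (3⁻¹ : ℝ) • h⟩
  have hbc : b + c = 2 • a := by
    rw [hw_def] at hwa
    linear_combination (norm := module) (2 : ℝ) • hwa
  exact ⟨rfl, eq_of_add_eq_two_nsmul_of_mem_extremePoints hx hb hc hbc⟩

theorem convexHull_nsmul (n : ℕ) {s : Set E} (hs : s.Nonempty) :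
    convexHull ℝ (n • s) = (n : ℝ) • convexHull ℝ s := by
  induction n with
  | zero => simp [Set.zero_smul_set (convexHull_nonempty_iff.2 hs)]
  | succ n ih =>
    rw [succ_nsmul, convexHull_add, ih, Nat.cast_succ,
      (convex_convexHull ℝ s).add_smul n.cast_nonneg zero_le_one, one_smul]

theorem Set.Finite.convexHull_extremePoints_convexHull [TopologicalSpace E] [T2Space E]
    [IsTopologicalAddGroup E] [ContinuousSMul ℝ E] [LocallyConvexSpace ℝ E] {s : Set E}
    (hs : s.Finite) : convexHull ℝ ((convexHull ℝ s).extremePoints ℝ) = convexHull ℝ s := by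
  have hfin : ((convexHull ℝ s).extremePoints ℝ).Finite := hs.subset extremePoints_convexHull_subset
  rw [← (hfin.isClosed_convexHull ℝ).closure_eq]
  exact closure_convexHull_extremePoints (hs.isCompact_convexHull ℝ) (convex_convexHull ℝ s)

end ExtremePoints

section Coefficients

variable {σ R E : Type*} [CommSemiring R] [AddCommGroup E] [Module ℝ E]
  {φ : (σ →₀ ℕ) →+ E} {S : Set (σ →₀ ℕ)} {v : σ →₀ ℕ} {p q r : MvPolynomial σ R}

theorem mul_mul_mem_restrictSupport_three_nsmul (hp : p ∈ restrictSupport R S)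
    (hq : q ∈ restrictSupport R S) (hr : r ∈ restrictSupport R S) :
    p * q * r ∈ restrictSupport R (3 • S) := by
  rw [restrictSupport_nsmul, pow_three']
  exact Submodule.mul_mem_mul (Submodule.mul_mem_mul hp hq) hr

theorem coeff_two_nsmul_mul_of_mem_extremePoints (hφ : Function.Injective φ)
    (hv : φ v ∈ (convexHull ℝ (φ '' S)).extremePoints ℝ)
    (hp : p ∈ restrictSupport R S) (hq : q ∈ restrictSupport R S) :
    coeff (2 • v) (p * q) = coeff v p * coeff v q := by
  classical
  rw [coeff_mul, Finset.sum_eq_single (v, v) _ (fun h => (h (by simp [two_nsmul])).elim)]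
  rintro ⟨a, b⟩ hab hne
  by_contra hab0
  have hsum : φ a + φ b = 2 • φ v := by
    rw [← map_add, ← map_nsmul, Finset.HasAntidiagonal.mem_antidiagonal.1 hab]
  obtain ⟨hav, hbv⟩ := eq_of_add_eq_two_nsmul_of_mem_extremePoints hv
    (subset_convexHull ℝ _ ⟨a, hp (mem_support_iff.2 (left_ne_zero_of_mul hab0)), rfl⟩)
    (subset_convexHull ℝ _ ⟨b, hq (mem_support_iff.2 (right_ne_zero_of_mul hab0)), rfl⟩) hsum
  exact hne (by rw [hφ hav, hφ hbv])

theorem coeff_three_nsmul_mul_mul_of_mem_extremePoints (hφ : Function.Injective φ)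
    (hv : φ v ∈ (convexHull ℝ (φ '' S)).extremePoints ℝ)
    (hp : p ∈ restrictSupport R S) (hq : q ∈ restrictSupport R S)
    (hr : r ∈ restrictSupport R S) :
    coeff (3 • v) (p * q * r) = coeff v p * coeff v q * coeff v r := by
  classical
  rw [coeff_mul, Finset.sum_eq_single (2 • v, v) _ (fun h => (h (by simp [succ_nsmul])).elim),
    coeff_two_nsmul_mul_of_mem_extremePoints hφ hv hp hq]
  rintro ⟨u, c⟩ huc hne
  by_contra huc0
  have hpq : p * q ∈ restrictSupport R (S + S) := by
    rw [restrictSupport_add]; exact Submodule.mul_mem_mul hp hq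
  obtain ⟨a, ha, b, hb, rfl⟩ := hpq (mem_support_iff.2 (left_ne_zero_of_mul huc0))
  have hsum : φ a + φ b + φ c = 3 • φ v := by
    rw [← map_add, ← map_add, ← map_nsmul, Finset.HasAntidiagonal.mem_antidiagonal.1 huc]
  have hmem : ∀ w ∈ S, φ w ∈ convexHull ℝ (φ '' S) := fun w hw =>
    subset_convexHull ℝ _ ⟨w, hw, rfl⟩
  obtain ⟨hav, hbv, hcv⟩ := eq_of_add_add_eq_three_nsmul_of_mem_extremePoints
    (convex_convexHull ℝ _) hv (hmem a ha) (hmem b hb)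
    (hmem c (hr (mem_support_iff.2 (right_ne_zero_of_mul huc0)))) hsum
  exact hne (by rw [hφ hav, hφ hbv, hφ hcv, two_nsmul])

end Coefficients

theorem convexHull_image_support_eq_nsmul {σ R E : Type*} [CommSemiring R] [AddCommGroup E]
    [Module ℝ E] [TopologicalSpace E] [T2Space E] [IsTopologicalAddGroup E]
    [ContinuousSMul ℝ E] [LocallyConvexSpace ℝ E] (φ : (σ →₀ ℕ) →+ E) {S : Set (σ →₀ ℕ)}
    (hS : S.Finite) (hS₀ : S.Nonempty) (n : ℕ) {F : MvPolynomial σ R}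
    (hF : F ∈ restrictSupport R (n • S))
    (hvert : ∀ v ∈ S, φ v ∈ (convexHull ℝ (φ '' S)).extremePoints ℝ → coeff (n • v) F ≠ 0) :
    convexHull ℝ (φ '' F.support) = (n : ℝ) • convexHull ℝ (φ '' S) := by
  apply subset_antisymm
  · rw [← convexHull_nsmul n (hS₀.image φ), ← Set.image_nsmul]
    exact convexHull_mono (Set.image_mono hF)
  · rw [← (hS.image φ).convexHull_extremePoints_convexHull, ← convexHull_smul]
    refine convexHull_mono ?_
    rintro _ ⟨_, hw, rfl⟩
    obtain ⟨v, hvS, rfl⟩ := extremePoints_convexHull_subset hw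
    exact ⟨n • v, mem_support_iff.2 (hvert v hvS hw), by simp [map_nsmul, Nat.cast_smul_eq_nsmul]⟩

section Euler

variable {σ R : Type*} [CommRing R]

def eulerOp (i : σ) : MvPolynomial σ R →ₗ[R] MvPolynomial σ R :=
  (LinearMap.mulLeft R (X i)).comp (pderiv i).toLinearMap

@[simp]
theorem eulerOp_apply (i : σ) (p : MvPolynomial σ R) : eulerOp i p = X i * pderiv i p := rfl

@[simp]
theorem coeff_eulerOp (i : σ) (p : MvPolynomial σ R) (m : σ →₀ ℕ) :
    coeff m (eulerOp i p) = m i * coeff m p := by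
  classical
  induction p using MvPolynomial.induction_on' with
  | monomial n a =>
    rw [eulerOp_apply, X_mul_pderiv_monomial, coeff_smul, coeff_monomial]
    split_ifs with h <;> simp [h]
  | add p q hp hq => rw [map_add, coeff_add, coeff_add, hp, hq, mul_add]

theorem eulerOp_mem_restrictSupport (i : σ) {S : Set (σ →₀ ℕ)} {p : MvPolynomial σ R}
    (hp : p ∈ restrictSupport R S) : eulerOp i p ∈ restrictSupport R S := fun m hm =>
  hp (mem_support_iff.2 (right_ne_zero_of_mul (coeff_eulerOp i p m ▸ mem_support_iff.1 hm)))

theorem eulerOp_eulerOp_self (i : σ) (p : MvPolynomial σ R) :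
    eulerOp i (eulerOp i p) = X i ^ 2 * pderiv i (pderiv i p) + eulerOp i p := by
  simp only [eulerOp_apply, pderiv_mul, pderiv_X_self]
  ring

theorem eulerOp_eulerOp_of_ne {i j : σ} (hij : i ≠ j) (p : MvPolynomial σ R) :
    eulerOp i (eulerOp j p) = X i * X j * pderiv i (pderiv j p) := by
  simp only [eulerOp_apply, pderiv_mul, pderiv_X_of_ne hij.symm]
  ring

end Euler

theorem X_sq_mul_X_sq_mul_hess (f : MvPolynomial (Fin 2) ℂ) :
    X 0 ^ 2 * X 1 ^ 2 * hess f =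
      2 * (eulerOp 0 f * eulerOp 1 f * eulerOp 0 (eulerOp 1 f))
        - eulerOp 0 f * eulerOp 0 f * (eulerOp 1 (eulerOp 1 f) - eulerOp 1 f)
        - eulerOp 1 f * eulerOp 1 f * (eulerOp 0 (eulerOp 0 f) - eulerOp 0 f) := by
  rw [eulerOp_eulerOp_self, eulerOp_eulerOp_self, eulerOp_eulerOp_of_ne zero_ne_one]
  simp only [hess, eulerOp_apply]
  ring

theorem X_sq_mul_X_sq_mul_hess_mem_restrictSupport (f : MvPolynomial (Fin 2) ℂ) :
    X 0 ^ 2 * X 1 ^ 2 * hess f ∈ restrictSupport ℂ (3 • (f.support : Set (Fin 2 →₀ ℕ))) := by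
  have hθ : ∀ i, eulerOp i f ∈ restrictSupport ℂ f.support := fun i =>
    eulerOp_mem_restrictSupport i ((mem_restrictSupport_iff ℂ).2 subset_rfl)
  have hθθ : ∀ i j, eulerOp i (eulerOp j f) ∈ restrictSupport ℂ f.support := fun i j =>
    eulerOp_mem_restrictSupport i (hθ j)
  rw [X_sq_mul_X_sq_mul_hess, two_mul]
  have h₀₁ := mul_mul_mem_restrictSupport_three_nsmul (hθ 0) (hθ 1) (hθθ 0 1)
  exact Submodule.sub_mem _ (Submodule.sub_mem _ (Submodule.add_mem _ h₀₁ h₀₁)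
    (mul_mul_mem_restrictSupport_three_nsmul (hθ 0) (hθ 0) (Submodule.sub_mem _ (hθθ 1 1) (hθ 1))))
    (mul_mul_mem_restrictSupport_three_nsmul (hθ 1) (hθ 1) (Submodule.sub_mem _ (hθθ 0 0) (hθ 0)))

theorem coeff_three_nsmul_X_sq_mul_X_sq_mul_hess {E : Type*} [AddCommGroup E] [Module ℝ E]
    {φ : (Fin 2 →₀ ℕ) →+ E} (hφ : Function.Injective φ) {f : MvPolynomial (Fin 2) ℂ}
    {v : Fin 2 →₀ ℕ} (hv : φ v ∈ (convexHull ℝ (φ '' f.support)).extremePoints ℝ) :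
    coeff (3 • v) (X 0 ^ 2 * X 1 ^ 2 * hess f) = coeff v f ^ 3 * (v 0 * v 1 * (v 0 + v 1)) := by
  have hθ : ∀ i, eulerOp i f ∈ restrictSupport ℂ f.support := fun i =>
    eulerOp_mem_restrictSupport i ((mem_restrictSupport_iff ℂ).2 subset_rfl)
  have hθθ : ∀ i j, eulerOp i (eulerOp j f) ∈ restrictSupport ℂ f.support := fun i j =>
    eulerOp_mem_restrictSupport i (hθ j)
  rw [X_sq_mul_X_sq_mul_hess, two_mul]
  simp only [coeff_sub, coeff_add]
  rw [coeff_three_nsmul_mul_mul_of_mem_extremePoints hφ hv (hθ 0) (hθ 1) (hθθ 0 1),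
    coeff_three_nsmul_mul_mul_of_mem_extremePoints hφ hv (hθ 0) (hθ 0)
      (Submodule.sub_mem _ (hθθ 1 1) (hθ 1)),
    coeff_three_nsmul_mul_mul_of_mem_extremePoints hφ hv (hθ 1) (hθ 1)
      (Submodule.sub_mem _ (hθθ 0 0) (hθ 0))]
  simp only [coeff_eulerOp, coeff_sub]
  ring

def expVec : (Fin 2 →₀ ℕ) →+ ℝ × ℝ where
  toFun m := ((m 0 : ℝ), (m 1 : ℝ))
  map_zero' := by simp
  map_add' a b := by simp

@[simp]
theorem expVec_apply (m : Fin 2 →₀ ℕ) : expVec m = ((m 0 : ℝ), (m 1 : ℝ)) := rfl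

theorem expVec_injective : Function.Injective expVec := fun a b h => by
  simp only [expVec_apply, Prod.mk.injEq, Nat.cast_inj] at h
  ext i
  fin_cases i
  exacts [h.1, h.2]

theorem newtonPolytope_eq_convexHull_image (f : MvPolynomial (Fin 2) ℂ) :
    newtonPolytope f = convexHull ℝ (expVec '' f.support) := by
  simp only [newtonPolytope, Set.image, expVec_apply, eq_comm, Finset.mem_coe]

theorem newton_of_hessian (f : MvPolynomial (Fin 2) ℂ) (hf : f ≠ 0)
    (hvert : ∀ q ∈ Set.extremePoints ℝ (newtonPolytope f), 1 ≤ q.1 ∧ 1 ≤ q.2) :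
    newtonPolytope (X 0 ^ 2 * X 1 ^ 2 * hess f) = (3 : ℝ) • newtonPolytope f ∧
    hess f ≠ 0 := by
  have hS : (f.support : Set (Fin 2 →₀ ℕ)).Nonempty := by simpa using hf
  have hNP : newtonPolytope (X 0 ^ 2 * X 1 ^ 2 * hess f) = (3 : ℝ) • newtonPolytope f := by
    simp only [newtonPolytope_eq_convexHull_image] at hvert ⊢
    refine convexHull_image_support_eq_nsmul expVec f.support.finite_toSet hS 3
      (X_sq_mul_X_sq_mul_hess_mem_restrictSupport f) fun v hvS hv => ?_
    obtain ⟨h0, h1⟩ := hvert _ hv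
    simp only [expVec_apply, Nat.one_le_cast] at h0 h1
    rw [coeff_three_nsmul_X_sq_mul_X_sq_mul_hess expVec_injective hv]
    refine mul_ne_zero (pow_ne_zero 3 (mem_support_iff.1 hvS)) ?_
    norm_cast
    simp only [mul_eq_zero, not_or]
    omega
  refine ⟨hNP, fun h0 => ?_⟩
  have hN : ((3 : ℝ) • newtonPolytope f).Nonempty := by
    rw [newtonPolytope_eq_convexHull_image]
    exact (hS.image expVec).convexHull.smul_set
  rw [← hNP, h0, mul_zero] at hN
  simp [newtonPolytope] at hN

end
end

section
/- Let P ⊂ ℝ² be the convex hull of a finite set of points of ℤ². Suppose the minimum of the y-coordinate on P equals y₀, that P contains at least two distinct lattice points with y-coordinate y₀, and that P contains some point with y-coordinate strictly greater than y₀. Then P contains at least one lattice point with y-coordinate equal to y₀ + 1. -/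
open scoped Pointwise
open MvPolynomial

noncomputable section

/-!
Some vertex `v` of `P` lies at height `y₀ + h` with `h ≥ 1`, and convexity puts two adjacent
lattice points `(a, y₀)`, `(a + 1, y₀)` into `P`. The triangle they span with `v` meets the row
`y₀ + 1` in the segment from `N / h` to `(N + h - 1) / h`, where `N = (h - 1) a + v₁`; among the
`h` consecutive integers `N, …, N + h - 1` one is a multiple `m h` of `h`, and `(m, y₀ + 1)` is
the lattice point sought.
-/

theorem Convex.smul_add_smul_add_smul_mem {𝕜 E : Type*} [Field 𝕜] [LinearOrder 𝕜]
    [IsStrictOrderedRing 𝕜] [AddCommGroup E] [Module 𝕜 E] {s : Set E} (hs : Convex 𝕜 s)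
    {x y z : E} (hx : x ∈ s) (hy : y ∈ s) (hz : z ∈ s) {a b c : 𝕜} (ha : 0 ≤ a) (hb : 0 ≤ b)
    (hc : 0 ≤ c) (habc : a + b + c = 1) : a • x + b • y + c • z ∈ s := by
  simpa [Fin.sum_univ_three] using
    hs.sum_mem (t := Finset.univ) (w := ![a, b, c]) (z := ![x, y, z])
      (by simp [Fin.forall_fin_succ, ha, hb, hc]) (by simp [Fin.sum_univ_three, habc])
      (by simp [Fin.forall_fin_succ, hx, hy, hz])

theorem Convex.horizontal_slice {s : Set (ℝ × ℝ)} (hs : Convex ℝ s) (y : ℝ) :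
    Convex ℝ {x : ℝ | (x, y) ∈ s} := by
  intro x₁ hx₁ x₂ hx₂ a b ha hb hab
  show (_, y) ∈ s
  convert hs hx₁ hx₂ ha hb hab using 1
  ext <;> simp only [Prod.smul_mk, Prod.mk_add_mk, smul_eq_mul]
  rw [← add_mul, hab, one_mul]

theorem Int.exists_mul_mem_Ico {h : ℤ} (hh : 0 < h) (n : ℤ) : ∃ m, m * h ∈ Set.Ico n (n + h) := by
  refine ⟨-(-n / h), ?_⟩
  have := Int.mul_ediv_add_emod (-n) h
  have := Int.emod_nonneg (-n) hh.ne'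
  have := Int.emod_lt_of_pos (-n) hh
  constructor <;> linarith

theorem Convex.rpt_add_one_mem {s : Set (ℝ × ℝ)} (hs : Convex ℝ s) {a b y : ℤ} (hab : a < b)
    (ha : rpt (a, y) ∈ s) (hb : rpt (b, y) ∈ s) : rpt (a + 1, y) ∈ s := by
  have hslice := convex_iff_ordConnected.1 (hs.horizontal_slice y)
  refine hslice.out ha hb ⟨?_, ?_⟩ <;> push_cast
  · linarith
  · exact_mod_cast hab

theorem Convex.exists_rpt_mem_row_succ {s : Set (ℝ × ℝ)} (hs : Convex ℝ s) {a y : ℤ}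
    (ha : rpt (a, y) ∈ s) (ha' : rpt (a + 1, y) ∈ s) {v : ℤ × ℤ} (hv : rpt v ∈ s) (hy : y < v.2) :
    ∃ m : ℤ, rpt (m, y + 1) ∈ s := by
  set h := v.2 - y with h_def
  obtain ⟨m, hm_lo, hm_hi⟩ := Int.exists_mul_mem_Ico (by omega : 0 < h) ((h - 1) * a + v.1)
  set r := m * h - ((h - 1) * a + v.1) with r_def
  have hH : (0 : ℝ) < h := by exact_mod_cast (by omega : 0 < h)
  have hr : (0 : ℝ) ≤ r := by exact_mod_cast (by omega : 0 ≤ r)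
  have hrH : (r : ℝ) ≤ h - 1 := by exact_mod_cast (by omega : r ≤ h - 1)
  refine ⟨m, ?_⟩
  -- barycentric coordinates of `(m, y + 1)` in the triangle, with `r = m h - N` in `[0, h - 1]`
  convert hs.smul_add_smul_add_smul_mem ha ha' hv (a := (h - 1 - r) / h) (b := r / h) (c := 1 / h)
    (div_nonneg (by linarith) hH.le) (by positivity) (by positivity) (by field_simp; ring) using 1
  have hm : (m : ℝ) * h = (h - 1) * a + v.1 + r := by rw [r_def]; push_cast; ring
  have hv2 : (v.2 : ℝ) = y + h := by rw [h_def]; push_cast; ring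
  ext <;> simp only [rpt, Prod.smul_mk, Prod.mk_add_mk, smul_eq_mul] <;> field_simp <;> push_cast
  · linear_combination hm
  · rw [hv2]; ring

theorem lattice_point_above_general (P : Set (ℝ × ℝ)) (hP : IsLatticePolygon P) (y₀ : ℤ)
    (htwo : ∃ k₁ k₂ : ℤ × ℤ, k₁ ≠ k₂ ∧ k₁.2 = y₀ ∧ k₂.2 = y₀ ∧ rpt k₁ ∈ P ∧ rpt k₂ ∈ P)
    (habove : ∃ p ∈ P, (y₀ : ℝ) < p.2) :
    ∃ k : ℤ × ℤ, k.2 = y₀ + 1 ∧ rpt k ∈ P := by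
  obtain ⟨V, -, rfl⟩ := hP
  set P := convexHull ℝ (rpt '' (V : Set (ℤ × ℤ)))
  have hconv : Convex ℝ P := convex_convexHull ℝ _
  obtain ⟨p, hp, hyp⟩ := habove
  obtain ⟨_, ⟨v, hvV, rfl⟩, hpv⟩ := ((LinearMap.snd ℝ ℝ ℝ).convexOn convex_univ
    ).exists_ge_of_mem_convexHull (Set.subset_univ _) hp
  have hv : rpt v ∈ P := subset_convexHull ℝ _ ⟨v, hvV, rfl⟩
  have hvy : y₀ < v.2 := by exact_mod_cast (hyp.trans_le hpv : (y₀ : ℝ) < v.2)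
  obtain ⟨⟨a₁, b₁⟩, ⟨a₂, b₂⟩, hne, hb₁, hb₂, h₁, h₂⟩ := htwo
  dsimp only at hb₁ hb₂
  subst b₁ b₂
  have ha : a₁ ≠ a₂ := fun h => hne (by rw [h])
  obtain ⟨m, hm⟩ : ∃ m : ℤ, rpt (m, y₀ + 1) ∈ P := by
    rcases ha.lt_or_gt with hlt | hlt
    · exact hconv.exists_rpt_mem_row_succ h₁ (hconv.rpt_add_one_mem hlt h₁ h₂) hv hvy
    · exact hconv.exists_rpt_mem_row_succ h₂ (hconv.rpt_add_one_mem hlt h₂ h₁) hv hvy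
  exact ⟨_, rfl, hm⟩

theorem lattice_point_above (P : Set (ℝ × ℝ)) (hP : IsLatticePolygon P) (y₀ : ℤ)
    (hmin : ∀ p ∈ P, (y₀ : ℝ) ≤ p.2)
    (htwo : ∃ k₁ k₂ : ℤ × ℤ, k₁ ≠ k₂ ∧ k₁.2 = y₀ ∧ k₂.2 = y₀ ∧ rpt k₁ ∈ P ∧ rpt k₂ ∈ P)
    (habove : ∃ p ∈ P, (y₀ : ℝ) < p.2) :
    ∃ k : ℤ × ℤ, k.2 = y₀ + 1 ∧ rpt k ∈ P :=
  lattice_point_above_general P hP y₀ htwo habove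

end
end

section
/- Let m, n ∈ ℤ be coprime (in particular not both zero) and let c₁, c₂ ∈ ℂ∖{0} with c₁ ≠ c₂. Consider the curves C_i = {(x,y) ∈ T : x^m·y^n = c_i} (integer powers of nonzero complex numbers). Then C₁ and C₂ have no common tangent line: there exist no affine complex line L ⊆ ℂ² and points p₁ ∈ C₁ ∩ L, p₂ ∈ C₂ ∩ L such that for each i, the analytic function t ↦ ℓ(t)₁^m · ℓ(t)₂^n − c_i has a zero of order ≥ 2 at t = 0, where ℓ(t) = p_i + t·w is an affine parametrization of L with direction vector w ≠ 0 (this function is analytic near t=0 since both coordinates of p_i are nonzero). -/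
open scoped Pointwise
open MvPolynomial

noncomputable section

/-! Along the line `p + t w` the tangency form `m w₁ y + n w₂ x` is affine in `t` with slope
`(m + n) w₁ w₂`. Tangency at two distinct points makes it vanish identically, and then
`x ^ m * y ^ n` is constant along the line, so `c₁ = c₂`. -/

section Tangency

variable {𝕜 : Type*} [NontriviallyNormedField 𝕜]

theorem hasDerivAt_line_zpow (m : ℤ) {a : 𝕜} (ha : a ≠ 0) (w : 𝕜) :
    HasDerivAt (fun t : 𝕜 => (a + t * w) ^ m) (m * a ^ (m - 1) * w) 0 := by
  have hline : HasDerivAt (fun t : 𝕜 => a + t * w) w 0 := by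
    simpa using ((hasDerivAt_id (0 : 𝕜)).mul_const w).const_add a
  have hzpow : HasDerivAt (fun z : 𝕜 => z ^ m) (m * a ^ (m - 1)) (a + 0 * w) := by
    simpa using hasDerivAt_zpow m a (Or.inl ha)
  exact hzpow.comp 0 hline

/-- `m w₁ b + n w₂ a` is `a b` times the logarithmic derivative of `x ^ m * y ^ n` along the line. -/
theorem tangent_of_deriv_eq_zero {m n : ℤ} {a b : 𝕜} (ha : a ≠ 0) (hb : b ≠ 0) {w₁ w₂ c : 𝕜}
    (hd : deriv (fun t : 𝕜 => (a + t * w₁) ^ m * (b + t * w₂) ^ n - c) 0 = 0) :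
    m * w₁ * b + n * w₂ * a = 0 := by
  have hD : HasDerivAt (fun t : 𝕜 => (a + t * w₁) ^ m * (b + t * w₂) ^ n - c)
      (m * a ^ (m - 1) * w₁ * (b + 0 * w₂) ^ n + (a + 0 * w₁) ^ m * (n * b ^ (n - 1) * w₂)) 0 :=
    ((hasDerivAt_line_zpow m ha w₁).mul (hasDerivAt_line_zpow n hb w₂)).sub_const c
  rw [hD.deriv, zpow_sub_one₀ ha, zpow_sub_one₀ hb] at hd
  have hlog : a ^ m * b ^ n * (m * w₁ * a⁻¹ + n * w₂ * b⁻¹) = 0 := by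
    simp only [zero_mul, add_zero] at hd
    linear_combination hd
  have hlog' := (mul_eq_zero.mp hlog).resolve_left
    (mul_ne_zero (zpow_ne_zero m ha) (zpow_ne_zero n hb))
  field_simp at hlog'
  linear_combination hlog'

end Tangency

section LineMonomial

variable {K : Type*} [Field K]

theorem zpow_mul_zpow_neg_eq_of_mul_eq_mul {x y a b : K} (hy : y ≠ 0) (hb : b ≠ 0)
    (h : x * b = a * y) (m : ℤ) : x ^ m * y ^ (-m) = a ^ m * b ^ (-m) := by
  simp only [zpow_neg, ← div_eq_mul_inv, ← div_zpow, (div_eq_div_iff hy hb).mpr h]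

variable [CharZero K]

theorem zpow_line_eq_of_mul_eq_zero {n : ℤ} {w : K} (h : (n : K) * w = 0) (b t : K) :
    (b + t * w) ^ n = b ^ n := by
  rcases mul_eq_zero.mp h with hn | hw
  · simp [Int.cast_eq_zero.mp hn]
  · simp [hw]

/-- Either the line is parallel to an axis along which the monomial does not vary, or `n = -m` and
the line passes through the origin, so that `x / y` is constant on it. -/
theorem line_zpow_mul_zpow_eq {m n : ℤ} {a b w₁ w₂ : K} (ha : a ≠ 0) (hb : b ≠ 0)
    (hsum : ((m : K) + n) * (w₁ * w₂) = 0) (htan : m * w₁ * b + n * w₂ * a = 0) {t : K}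
    (hb' : b + t * w₂ ≠ 0) :
    (a + t * w₁) ^ m * (b + t * w₂) ^ n = a ^ m * b ^ n := by
  rcases mul_eq_zero.mp hsum with hmn | hw
  · obtain rfl : n = -m := by
      have : m + n = 0 := by exact_mod_cast hmn
      omega
    by_cases hm : (m : K) = 0
    · simp [Int.cast_eq_zero.mp hm]
    have hpar : w₁ * b = w₂ * a := by
      refine sub_eq_zero.mp ((mul_eq_zero.mp ?_).resolve_left hm)
      push_cast at htan
      linear_combination htan
    exact zpow_mul_zpow_neg_eq_of_mul_eq_mul hb' hb (by linear_combination t * hpar) m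
  rcases mul_eq_zero.mp hw with hw₁ | hw₂
  · have hn : (n : K) * w₂ = 0 := by
      simpa [hw₁, ha] using htan
    simp [hw₁, zpow_line_eq_of_mul_eq_zero hn]
  · have hm : (m : K) * w₁ = 0 := by
      simpa [hw₂, hb] using htan
    simp [hw₂, zpow_line_eq_of_mul_eq_zero hm]

end LineMonomial

theorem binomial_curves_no_common_tangent_general (m n : ℤ)
    (c₁ c₂ : ℂ) (hne : c₁ ≠ c₂) :
    ¬∃ (p₁ p₂ w : ℂ × ℂ), w ≠ 0 ∧
      p₁ ∈ Torus ∧ p₂ ∈ Torus ∧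
      p₁.1 ^ m * p₁.2 ^ n = c₁ ∧ p₂.1 ^ m * p₂.2 ^ n = c₂ ∧
      p₂ ∈ lineThrough p₁ w ∧
      (fun t : ℂ => (p₁.1 + t * w.1) ^ m * (p₁.2 + t * w.2) ^ n - c₁) 0 = 0 ∧
      deriv (fun t : ℂ => (p₁.1 + t * w.1) ^ m * (p₁.2 + t * w.2) ^ n - c₁) 0 = 0 ∧
      (fun t : ℂ => (p₂.1 + t * w.1) ^ m * (p₂.2 + t * w.2) ^ n - c₂) 0 = 0 ∧
      deriv (fun t : ℂ => (p₂.1 + t * w.1) ^ m * (p₂.2 + t * w.2) ^ n - c₂) 0 = 0 := by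
  rintro ⟨⟨a, b⟩, p₂, ⟨w₁, w₂⟩, -, ⟨ha, hb⟩, ⟨ha₂, hb₂⟩, hc₁, hc₂, ⟨t, rfl⟩, -, hd₁, -, hd₂⟩
  dsimp only at ha hb ha₂ hb₂ hc₁ hc₂ hd₁ hd₂
  have htan₁ := tangent_of_deriv_eq_zero ha hb hd₁
  have htan₂ := tangent_of_deriv_eq_zero ha₂ hb₂ hd₂
  have ht : t ≠ 0 := by
    rintro rfl
    simp only [zero_mul, add_zero] at hc₂
    exact hne (hc₁.symm.trans hc₂)
  have hsum : ((m : ℂ) + n) * (w₁ * w₂) = 0 :=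
    mul_left_cancel₀ ht (by linear_combination htan₂ - htan₁)
  exact hne (hc₁.symm.trans ((line_zpow_mul_zpow_eq ha hb hsum htan₁ hb₂).symm.trans hc₂))

theorem binomial_curves_no_common_tangent (m n : ℤ) (hmn : Int.gcd m n = 1)
    (c₁ c₂ : ℂ) (h₁ : c₁ ≠ 0) (h₂ : c₂ ≠ 0) (hne : c₁ ≠ c₂) :
    ¬∃ (p₁ p₂ w : ℂ × ℂ), w ≠ 0 ∧
      p₁ ∈ Torus ∧ p₂ ∈ Torus ∧
      p₁.1 ^ m * p₁.2 ^ n = c₁ ∧ p₂.1 ^ m * p₂.2 ^ n = c₂ ∧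
      p₂ ∈ lineThrough p₁ w ∧
      (fun t : ℂ => (p₁.1 + t * w.1) ^ m * (p₁.2 + t * w.2) ^ n - c₁) 0 = 0 ∧
      deriv (fun t : ℂ => (p₁.1 + t * w.1) ^ m * (p₁.2 + t * w.2) ^ n - c₁) 0 = 0 ∧
      (fun t : ℂ => (p₂.1 + t * w.1) ^ m * (p₂.2 + t * w.2) ^ n - c₂) 0 = 0 ∧
      deriv (fun t : ℂ => (p₂.1 + t * w.1) ^ m * (p₂.2 + t * w.2) ^ n - c₂) 0 = 0 :=
  binomial_curves_no_common_tangent_general m n c₁ c₂ hne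

end
end
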